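/- Let R be a commutative ring, let k ≥ 2, let x_1, …, x_k ∈ R, let a = (a_1, a_2, …) be a sequence in R, and let m be any integer. Then h^{gl}_m((x_1,…,x_{k−1})|a) − h^{gl}_m((x_2,…,x_k)|a) = (x_1 − x_k) · h^{gl}_{m−1}((x_1,…,x_k)|a). -/

import Mathlib

/-!
In the generating function `∏ (1 - t x_i)⁻¹ ∏ (1 + t a_j)`, deleting `x_k`, resp. `x_1`, from
the `k` variables multiplies the first product by `1 - t x_k`, resp. `1 - t x_1`; the difference
of the two is `(x_1 - x_k) t` times the full product. Both `h_m` of `k - 1` variables and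
`h_{m-1}` of `k` variables use the same `k + m - 2` factors `1 + t a_j`, so comparing
coefficients of `t^m` gives the recurrence.
-/

open Finset

noncomputable def geom {R : Type*} [CommRing R] (x : R) : PowerSeries R :=
  PowerSeries.mk fun k => x ^ k

noncomputable def lin {R : Type*} [CommRing R] (a : R) : PowerSeries R :=
  1 + PowerSeries.C a * PowerSeries.X

noncomputable def facpow {R : Type*} [CommRing R] (x : R) (a : ℕ → R) (m : ℕ) : R :=
  ∏ j ∈ Finset.range m, (x + a (j + 1))

noncomputable def hgl {R : Type*} [CommRing R] {n : ℕ} (x : Fin n → R) (a : ℕ → R) (m : ℤ) : R :=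
  if 0 ≤ m then
    PowerSeries.coeff m.toNat
      ((∏ i, geom (x i)) * ∏ j ∈ Finset.range (n + m.toNat - 1), lin (a (j + 1)))
  else 0

noncomputable def hsp {R : Type*} [CommRing R] {n : ℕ} (x : Fin n → Rˣ) (a : ℕ → R) (m : ℤ) : R :=
  if 0 ≤ m then
    PowerSeries.coeff m.toNat
      ((∏ i, geom ((x i : R)) * geom (((x i)⁻¹ : Rˣ) : R)) *
        ∏ j ∈ Finset.range (n + m.toNat - 1), lin (a (j + 1)))
  else 0

noncomputable def hoo {R : Type*} [CommRing R] {n : ℕ} (x : Fin n → Rˣ) (a : ℕ → R) (m : ℤ) : R :=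
  if 0 ≤ m then
    PowerSeries.coeff m.toNat
      ((1 + PowerSeries.X) * (∏ i, geom ((x i : R)) * geom (((x i)⁻¹ : Rˣ) : R)) *
        ∏ j ∈ Finset.range (n + m.toNat - 1), lin (a (j + 1)))
  else 0

noncomputable def heo {R : Type*} [CommRing R] {n : ℕ} (x : Fin n → Rˣ) (a : ℕ → R) (m : ℤ) : R :=
  if 0 ≤ m then
    if h : n = 1 then
      (PowerSeries.coeff m.toNat
        ((geom ((x ⟨0, by omega⟩ : Rˣ) : R) + geom (((x ⟨0, by omega⟩)⁻¹ : Rˣ) : R)) *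
          ∏ j ∈ Finset.range m.toNat, lin (a (j + 1))))
        - (if m = 0 then 1 else 0)
    else
      PowerSeries.coeff m.toNat
        ((1 - PowerSeries.X ^ 2) * (∏ i, geom ((x i : R)) * geom (((x i)⁻¹ : Rˣ) : R)) *
          ∏ j ∈ Finset.range (n + m.toNat - 1), lin (a (j + 1)))
  else 0

noncomputable def heod {R : Type*} [CommRing R] {n : ℕ} (x : Fin n → Rˣ) (a : ℕ → R) (m : ℤ) : R :=
  if 0 < m then
    if h : 0 < n then
      PowerSeries.coeff m.toNat
        ((geom ((x ⟨0, h⟩ : Rˣ) : R) - geom (((x ⟨0, h⟩)⁻¹ : Rˣ) : R)) *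
          (∏ i ∈ Finset.univ.filter (fun i : Fin n => i ≠ ⟨0, h⟩),
            geom ((x i : R)) * geom (((x i)⁻¹ : Rˣ) : R)) *
          ∏ j ∈ Finset.range (n + m.toNat - 1), lin (a (j + 1)))
    else 0
  else 0


open PowerSeries

section

variable {R : Type*} [CommRing R]

theorem geom_eq_rescale (x : R) : geom x = rescale x (mk 1) := by
  simp [geom, rescale_mk]

theorem geom_mul_one_sub_C_mul_X (x : R) : geom x * (1 - C x * X) = 1 := by
  rw [geom_eq_rescale, ← rescale_X, ← map_one (rescale x), ← map_sub, ← map_mul,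
    mk_one_mul_one_sub_eq_one, map_one]

theorem constantCoeff_geom (x : R) : constantCoeff (geom x) = 1 := by
  simp [geom]

theorem constantCoeff_lin (a : R) : constantCoeff (lin a) = 1 := by
  simp [lin]

theorem prod_geom_castSucc_sub_prod_geom_succ {n : ℕ} (x : Fin (n + 1) → R) :
    (∏ i : Fin n, geom (x i.castSucc)) - ∏ i : Fin n, geom (x i.succ) =
      C (x 0 - x (Fin.last n)) * X * ∏ i, geom (x i) := by
  have hinit :
      ∏ i : Fin n, geom (x i.castSucc) = (∏ i, geom (x i)) * (1 - C (x (Fin.last n)) * X) := by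
    rw [Fin.prod_univ_castSucc, mul_assoc, geom_mul_one_sub_C_mul_X, mul_one]
  have htail : ∏ i : Fin n, geom (x i.succ) = (∏ i, geom (x i)) * (1 - C (x 0) * X) := by
    rw [Fin.prod_univ_succ, mul_comm (geom (x 0)), mul_assoc, geom_mul_one_sub_C_mul_X, mul_one]
  rw [hinit, htail, map_sub]
  ring

section hgl

variable {n : ℕ} (x : Fin n → R) (a : ℕ → R)

theorem hgl_of_neg {m : ℤ} (hm : m < 0) : hgl x a m = 0 :=
  if_neg hm.not_ge

theorem hgl_zero : hgl x a 0 = 1 := by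
  simp [hgl, map_prod, constantCoeff_geom, constantCoeff_lin]

theorem hgl_natCast (q : ℕ) :
    hgl x a q = coeff q ((∏ i, geom (x i)) * ∏ j ∈ range (n + q - 1), lin (a (j + 1))) := by
  simp [hgl]

end hgl

theorem hgl_castSucc_sub_hgl_succ {n : ℕ} (x : Fin (n + 1) → R) (a : ℕ → R) (m : ℤ) :
    hgl (fun i : Fin n => x i.castSucc) a m - hgl (fun i : Fin n => x i.succ) a m =
      (x 0 - x (Fin.last n)) * hgl x a (m - 1) := by
  rcases lt_trichotomy m 0 with hm | rfl | hm
  · rw [hgl_of_neg _ _ hm, hgl_of_neg _ _ hm, hgl_of_neg _ _ (by omega), sub_self, mul_zero]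
  · rw [hgl_zero, hgl_zero, hgl_of_neg _ _ (by omega), sub_self, mul_zero]
  · obtain ⟨q, rfl⟩ : ∃ q : ℕ, m = (q + 1 : ℕ) := ⟨(m - 1).toNat, by omega⟩
    have hlen : n + (q + 1) - 1 = n + 1 + q - 1 := by omega
    rw [show ((q + 1 : ℕ) : ℤ) - 1 = q by omega, hgl_natCast, hgl_natCast, hgl_natCast, hlen,
      ← map_sub, ← sub_mul, prod_geom_castSucc_sub_prod_geom_succ, mul_assoc, mul_assoc,
      coeff_C_mul, coeff_succ_X_mul]

end

theorem hgl_recurrence {R : Type*} [CommRing R] (k : ℕ) (hk : 2 ≤ k)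
    (x : Fin k → R) (a : ℕ → R) (m : ℤ) :
    hgl (fun i : Fin (k - 1) => x ⟨(i : ℕ), by have := i.isLt; omega⟩) a m
      - hgl (fun i : Fin (k - 1) => x ⟨(i : ℕ) + 1, by have := i.isLt; omega⟩) a m =
    (x ⟨0, by omega⟩ - x ⟨k - 1, by omega⟩) * hgl x a (m - 1) := by
  obtain ⟨n, rfl⟩ : ∃ n, k = n + 1 := ⟨k - 1, by omega⟩
  exact hgl_castSucc_sub_hgl_succ x a m
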